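/- Let H and F be candidate sequences on a compact metrizable space M. Then: (i) the transfinite sequence is monotone in the ordinal, i.e. for ordinals β ≤ α, u_β^H ≤ u_α^H pointwise; and (ii) if H and F are uniformly equivalent, then u_α^H = u_α^F for every ordinal α (so the transfinite sequence depends only on the uniform equivalence class). -/

import Mathlib

open Filter Topology Set
open scoped ENNReal

/-- A candidate sequence on a topological space `M`: a nondecreasing sequence of
nonnegative functions, starting at `0`, with bounded pointwise limit. -/
structure CandidateSeq (M : Type*) [TopologicalSpace M] where
  h : ℕ → M → ℝ
  nonneg : ∀ k x, 0 ≤ h k x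
  mono : ∀ x, Monotone fun k => h k x
  zero : ∀ x, h 0 x = 0
  limFn : M → ℝ
  tendsto_limFn : ∀ x, Tendsto (fun k => h k x) atTop (𝓝 (limFn x))
  bddAbove : ∃ B : ℝ, ∀ x, limFn x ≤ B

namespace CandidateSeq

variable {M : Type*} [TopologicalSpace M]

/-- The upper semicontinuous envelope of a `[0,∞]`-valued function:
`f~(x) = limsup_{y → x} f(y)`, the limsup including the value at `x` itself. -/
noncomputable def uscEnv (f : M → ℝ≥0∞) : M → ℝ≥0∞ := fun x => Filter.limsup f (𝓝 x)

/-- The tail functions `τ_k = h - h_k` (nonnegative, viewed in `[0,∞]`). -/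
noncomputable def tau (H : CandidateSeq M) (k : ℕ) : M → ℝ≥0∞ :=
  fun x => ENNReal.ofReal (H.limFn x - H.h k x)

/-- The transfinite sequence `u_α^H` associated to a candidate sequence, defined by
transfinite recursion: `u_0 ≡ 0`; `u_{α+1} = lim_k (u_α + τ_k)~` (the envelopes are
nonincreasing in `k`, so the limit is the infimum); at limit ordinals,
`u_α = (sup_{β<α} u_β)~`. Values are taken in `[0,∞]`. -/
noncomputable def u (H : CandidateSeq M) (α : Ordinal) : M → ℝ≥0∞ :=
  Ordinal.limitRecOn α
    (fun _ => 0)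
    (fun _ v => fun x => ⨅ k : ℕ, uscEnv (fun y => v y + H.tau k y) x)
    (fun o _ ih => uscEnv (fun y => ⨆ p : {β : Ordinal // β < o}, ih p.1 p.2 y))

/-- The order of accumulation of a candidate sequence: the least ordinal `α`
with `u_α = u_{α+1}`. -/
noncomputable def orderOfAccum (H : CandidateSeq M) : Ordinal :=
  sInf {α : Ordinal | H.u α = H.u (α + 1)}

/-- The restriction `H|_S` of a candidate sequence to a subset, as a candidate
sequence on the subspace `S`. -/
def restrict (H : CandidateSeq M) (S : Set M) : CandidateSeq S where
  h k x := H.h k x.1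
  nonneg k x := H.nonneg k x.1
  mono x := H.mono x.1
  zero x := H.zero x.1
  limFn x := H.limFn x.1
  tendsto_limFn x := H.tendsto_limFn x.1
  bddAbove := H.bddAbove.imp fun B hB x => hB x.1

/-- The pullback `F ∘ π` of a candidate sequence along a map. -/
def comp {K : Type*} [TopologicalSpace K] (F : CandidateSeq K) (π : M → K) :
    CandidateSeq M where
  h k x := F.h k (π x)
  nonneg k x := F.nonneg k (π x)
  mono x := F.mono (π x)
  zero x := F.zero (π x)
  limFn x := F.limFn (π x)
  tendsto_limFn x := F.tendsto_limFn (π x)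
  bddAbove := F.bddAbove.imp fun B hB x => hB (π x)

/-- `H` uniformly dominates `F`. -/
def UnifDominates (H F : CandidateSeq M) : Prop :=
  ∀ ε : ℝ, 0 < ε → ∀ k, ∃ l, ∀ x, F.h k x ≤ H.h l x + ε

/-- Uniform equivalence of candidate sequences. -/
def UnifEquiv (H F : CandidateSeq M) : Prop :=
  UnifDominates H F ∧ UnifDominates F H

end CandidateSeq

/-! Each stage dominates the earlier ones: `u_{α+1} ≥ u_α` because the envelope dominates
the function and `τ_k ≥ 0`, and a limit stage dominates the supremum below it.
Uniform equivalence forces equal limits `h`, hence for every `k` and `ε > 0` some tail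
`τ_l^H` lies below `τ_k^F + ε`; as the envelope commutes with adding a constant, the
successor step produces the same function for `H` and `F`, and transfinite induction gives
`u_α^H = u_α^F`. -/

open scoped NNReal

namespace CandidateSeq

variable {M : Type*} [TopologicalSpace M]

theorem self_le_uscEnv (f : M → ℝ≥0∞) (x : M) : f x ≤ uscEnv f x :=
  le_limsup_of_frequently_le <|
    (show ∀ᶠ y in pure x, f x ≤ f y from eventually_pure.2 le_rfl).frequently.filter_mono
      (pure_le_nhds x)

theorem uscEnv_mono {f g : M → ℝ≥0∞} (h : f ≤ g) : uscEnv f ≤ uscEnv g :=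
  fun _ => limsup_le_limsup (Eventually.of_forall h)

theorem uscEnv_add_const (f : M → ℝ≥0∞) (c : ℝ≥0∞) :
    uscEnv (fun y => f y + c) = fun x => uscEnv f x + c :=
  funext fun x => limsup_add_const (𝓝 x) f c (by isBoundedDefault) (by isBoundedDefault)

theorem iInf_uscEnv_add_le_of_forall_exists_le_add (v : M → ℝ≥0∞) {τ σ : ℕ → M → ℝ≥0∞}
    (hτσ : ∀ k, ∀ ε : ℝ≥0, 0 < ε → ∃ l, ∀ y, τ l y ≤ σ k y + ε) (x : M) :
    ⨅ k, uscEnv (fun y => v y + τ k y) x ≤ ⨅ k, uscEnv (fun y => v y + σ k y) x := by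
  refine le_iInf fun k => ENNReal.le_of_forall_pos_le_add fun ε hε _ => ?_
  obtain ⟨l, hl⟩ := hτσ k ε hε
  calc ⨅ k, uscEnv (fun y => v y + τ k y) x
      ≤ uscEnv (fun y => v y + τ l y) x := iInf_le _ l
    _ ≤ uscEnv (fun y => (v y + σ k y) + ε) x :=
        uscEnv_mono (fun y => by rw [add_assoc]; gcongr; exact hl y) x
    _ = uscEnv (fun y => v y + σ k y) x + ε := by rw [uscEnv_add_const]

theorem u_zero (H : CandidateSeq M) : H.u 0 = 0 :=
  Ordinal.limitRecOn_zero _ _ _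

theorem u_add_one (H : CandidateSeq M) (α : Ordinal) :
    H.u (α + 1) = fun x => ⨅ k, uscEnv (fun y => H.u α y + H.tau k y) x :=
  Ordinal.limitRecOn_add_one _ _ _ _

theorem u_limit (H : CandidateSeq M) {α : Ordinal} (hα : Order.IsSuccLimit α) :
    H.u α = uscEnv (fun y => ⨆ β : {β : Ordinal // β < α}, H.u β y) :=
  Ordinal.limitRecOn_limit _ _ _ _ hα

theorem u_le_u_add_one (H : CandidateSeq M) (α : Ordinal) : H.u α ≤ H.u (α + 1) := by
  intro x
  rw [u_add_one]
  exact le_iInf fun k => le_self_add.trans (self_le_uscEnv _ x)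

theorem u_mono (H : CandidateSeq M) : Monotone H.u := by
  intro β α hβα
  induction α using Ordinal.limitRecOn generalizing β with
  | zero => rw [nonpos_iff_eq_zero.mp hβα]
  | add_one α ih =>
    rcases hβα.eq_or_lt with rfl | hlt
    · exact le_rfl
    · exact (ih (Order.lt_add_one_iff.mp hlt)).trans (H.u_le_u_add_one α)
  | limit α hα _ =>
    rcases hβα.eq_or_lt with rfl | hlt
    · exact le_rfl
    · intro x
      rw [u_limit H hα]
      exact (le_iSup (fun β : {β : Ordinal // β < α} => H.u β x) ⟨β, hlt⟩).trans
        (self_le_uscEnv _ x)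

theorem UnifDominates.limFn_le {H F : CandidateSeq M} (hd : UnifDominates H F) :
    F.limFn ≤ H.limFn := by
  intro x
  refine le_of_forall_pos_le_add fun ε hε => ?_
  refine le_of_tendsto (F.tendsto_limFn x) (Eventually.of_forall fun k => ?_)
  obtain ⟨l, hl⟩ := hd ε hε k
  calc F.h k x ≤ H.h l x + ε := hl x
    _ ≤ H.limFn x + ε := by gcongr; exact (H.mono x).ge_of_tendsto (H.tendsto_limFn x) l

theorem UnifEquiv.limFn_eq {H F : CandidateSeq M} (he : UnifEquiv H F) : H.limFn = F.limFn :=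
  le_antisymm he.2.limFn_le he.1.limFn_le

theorem UnifDominates.exists_tau_le_add {H F : CandidateSeq M} (hd : UnifDominates H F)
    (hlim : H.limFn = F.limFn) (k : ℕ) (ε : ℝ≥0) (hε : 0 < ε) :
    ∃ l, ∀ x, H.tau l x ≤ F.tau k x + ε := by
  obtain ⟨l, hl⟩ := hd ε hε k
  refine ⟨l, fun x => ?_⟩
  calc H.tau l x ≤ ENNReal.ofReal ((F.limFn x - F.h k x) + ε) := by
        refine ENNReal.ofReal_le_ofReal ?_
        linarith [hl x, congrFun hlim x]
    _ ≤ ENNReal.ofReal (F.limFn x - F.h k x) + ENNReal.ofReal ε := ENNReal.ofReal_add_le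
    _ = F.tau k x + ε := by rw [ENNReal.ofReal_coe_nnreal]; rfl

theorem UnifEquiv.u_eq {H F : CandidateSeq M} (he : UnifEquiv H F) (α : Ordinal) :
    H.u α = F.u α := by
  induction α using Ordinal.limitRecOn with
  | zero => rw [u_zero, u_zero]
  | add_one α ih =>
    have hlim := he.limFn_eq
    rw [u_add_one, u_add_one, ih]
    funext x
    exact le_antisymm
      (iInf_uscEnv_add_le_of_forall_exists_le_add _ (he.1.exists_tau_le_add hlim) x)
      (iInf_uscEnv_add_le_of_forall_exists_le_add _ (he.2.exists_tau_le_add hlim.symm) x)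
  | limit α hα ih =>
    simp only [u_limit _ hα, fun β : {β : Ordinal // β < α} => ih β.1 β.2]

end CandidateSeq

theorem uSeq_mono_and_unifEquiv_invariant_general {M : Type*} [TopologicalSpace M]
    (H F : CandidateSeq M) :
    (∀ β α : Ordinal, β ≤ α → ∀ x, H.u β x ≤ H.u α x) ∧
      (CandidateSeq.UnifEquiv H F → ∀ α : Ordinal, H.u α = F.u α) :=
  ⟨fun _ _ hβα => H.u_mono hβα, fun he => he.u_eq⟩

/-- **Monotonicity in the ordinal and invariance under uniform equivalence**:
(i) for ordinals `β ≤ α`, `u_β^H ≤ u_α^H` pointwise; (ii) if `H` and `F` are uniformly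
equivalent candidate sequences on a compact metrizable space `M`, then `u_α^H = u_α^F`
for every ordinal `α`. -/
theorem uSeq_mono_and_unifEquiv_invariant {M : Type*} [TopologicalSpace M] [CompactSpace M]
    [TopologicalSpace.MetrizableSpace M] (H F : CandidateSeq M) :
    (∀ β α : Ordinal, β ≤ α → ∀ x, H.u β x ≤ H.u α x) ∧
      (CandidateSeq.UnifEquiv H F → ∀ α : Ordinal, H.u α = F.u α) :=
  uSeq_mono_and_unifEquiv_invariant_general H F
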